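/- Let $G$ be a linear algebraic group acting freely on an affine scheme $E'$ such that all orbits are closed. Then there exists a finite-dimensional representation $V$ of $G$ and a $G$-equivariant closed immersion $E' \to V$; moreover the image of $E'$ lies in $V^{sf}$, the set of points with closed orbit and trivial stabilizer. -/
import Mathlib


/-- The algebra of polynomial functions on a `k`-module `V`: the subalgebra
of `V → k` generated by the linear functionals. -/
def linearPolyFunctions (k V : Type) [CommRing k] [AddCommGroup V] [Module k V] :
    Subalgebra k (V → k) :=
  Algebra.adjoin k (Set.range fun φ : Module.Dual k V => (φ : V → k))

/-- A subset of a `k`-module is Zariski closed if it is the common zero set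
of a family of polynomial functions. -/
def ZariskiClosed (k : Type) {V : Type} [CommRing k] [AddCommGroup V] [Module k V]
    (s : Set V) : Prop :=
  ∃ F : Set (V → k), (∀ f ∈ F, f ∈ linearPolyFunctions k V) ∧
    s = {v | ∀ f ∈ F, f v = 0}

/-- Let `G` be a linear algebraic group acting freely, with
closed orbits, on an affine scheme `E' = Spec A` (over an algebraically closed
field `k`).  Then there is a finite-dimensional representation `V` of `G` and a
`G`-equivariant closed immersion `E' → V`; moreover the image of `E'` lies in
`V^{sf}`, the set of points with closed orbit and trivial stabilizer.

We work with the coordinate ring `A` (a finite type `k`-algebra) with `G`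
acting by `k`-algebra automorphisms, locally finitely (every element lies in a
finite-dimensional `G`-stable subspace); the scheme `E'` is represented by its
`k`-points `A →ₐ[k] k`, on which `G` acts by `g • x = x ∘ ρ(g)⁻¹`.  A closed
immersion into `V` is an injective map with Zariski closed image whose
coordinates are regular functions (elements of `A`). -/
theorem equivariant_embedding_into_representation
    (k : Type) [Field k] [IsAlgClosed k]
    (G : Type) [Group G]
    (A : Type) [CommRing A] [Algebra k A] (hft : Algebra.FiniteType k A)
    (ρ : G →* (A ≃ₐ[k] A))
    -- local finiteness of the `G`-action on `A`
    (hlf : ∀ a : A, ∃ W : Submodule k A, FiniteDimensional k W ∧ a ∈ W ∧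
      ∀ g : G, W.map (ρ g).toLinearMap ≤ W)
    -- the action of `G` on the points of `E'` is free
    (hfree : ∀ (g : G) (x : A →ₐ[k] k),
      x.comp (ρ g : A →ₐ[k] A) = x → g = 1)
    -- all orbits are (Zariski) closed in `E'`
    (hclosed : ∀ x : A →ₐ[k] k, ∃ S : Set A,
      {y : A →ₐ[k] k | ∃ g : G, y = x.comp (ρ g : A →ₐ[k] A)}
        = {y : A →ₐ[k] k | ∀ a ∈ S, y a = 0}) :
    ∃ (V : Type) (_ : AddCommGroup V) (_ : Module k V)
      (_ : FiniteDimensional k V)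
      -- a representation of `G` on `V`
      (ρV : G →* (V ≃ₗ[k] V))
      -- the embedding of `E'` into `V`
      (ι : (A →ₐ[k] k) → V),
      -- `ι` is `G`-equivariant
      (∀ (g : G) (x : A →ₐ[k] k),
        ι (x.comp (ρ g⁻¹ : A →ₐ[k] A)) = ρV g (ι x)) ∧
      -- `ι` is a closed immersion: injective, with Zariski closed image and
      -- regular coordinate functions
      Function.Injective ι ∧
      ZariskiClosed k (Set.range ι) ∧
      (∀ ξ : Module.Dual k V, ∃ a : A, ∀ x : A →ₐ[k] k, ξ (ι x) = x a) ∧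
      -- the image of `E'` lies in `V^{sf}`: each image point has Zariski
      -- closed `G`-orbit and trivial stabilizer
      (∀ x : A →ₐ[k] k,
        ZariskiClosed k (Set.range fun g : G => ρV g (ι x)) ∧
        (∀ g : G, ρV g (ι x) = ι x → g = 1)) := by
  classical
  obtain ⟨s, hs⟩ := hft
  choose Wa hWafd hWamem hWastab using hlf
  haveI : ∀ a, FiniteDimensional k (Wa a) := hWafd
  set W : Submodule k A := s.sup Wa with hWdef
  haveI hWfd : FiniteDimensional k W := Submodule.finiteDimensional_finset_sup _ _
  have hWstab : ∀ (g : G) (w : A), w ∈ W → ρ g w ∈ W := by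
    intro g w hw
    have : W ≤ Submodule.comap (ρ g).toLinearMap W := by
      refine Finset.sup_le fun a ha => ?_
      exact Submodule.map_le_iff_le_comap.mp
        (le_trans (hWastab a g) (Finset.le_sup ha))
    exact this hw
  have hWgen : Algebra.adjoin k (W : Set A) = ⊤ := by
    rw [← top_le_iff, ← hs]
    refine Algebra.adjoin_le fun a ha => Algebra.subset_adjoin ?_
    have hle : Wa a ≤ W := Finset.le_sup ha
    exact hle (hWamem a)
  -- the action of `G` on `W`
  let e : G → (W →ₗ[k] W) := fun g =>
    ((ρ g).toLinearMap).restrict (fun w hw => hWstab g w hw)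
  have he : ∀ (g : G) (w : W), ((e g w : W) : A) = ρ g (w : A) := fun _ _ => rfl
  have hcomp : ∀ g h : G, (e g) ∘ₗ (e h) = e (g * h) := by
    intro g h
    ext w
    show ρ g (ρ h (w : A)) = ρ (g * h) (w : A)
    rw [map_mul]
    rfl
  have hid : e 1 = LinearMap.id := by
    ext w
    show ρ 1 (w : A) = (w : A)
    rw [map_one]
    rfl
  let eE : G → (W ≃ₗ[k] W) := fun g =>
    LinearEquiv.ofLinear (e g) (e g⁻¹)
      (by rw [hcomp, mul_inv_cancel, hid]) (by rw [hcomp, inv_mul_cancel, hid])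
  have heE : ∀ (g : G) (w : W), ((eE g w : W) : A) = ρ g (w : A) := fun _ _ => rfl
  -- the representation on the dual
  let ρV : G →* (Module.Dual k W ≃ₗ[k] Module.Dual k W) :=
    { toFun := fun g => (eE g⁻¹).dualMap
      map_one' := by
        refine LinearEquiv.ext fun φ => LinearMap.ext fun w => ?_
        have hw : eE (1 : G)⁻¹ w = w := Subtype.ext (by rw [heE, inv_one, map_one]; rfl)
        show φ (eE (1 : G)⁻¹ w) = φ w
        rw [hw]
      map_mul' := by
        intro g h
        refine LinearEquiv.ext fun φ => LinearMap.ext fun w => ?_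
        have hw : eE (g * h)⁻¹ w = eE h⁻¹ (eE g⁻¹ w) := by
          refine Subtype.ext ?_
          rw [heE, heE, heE, mul_inv_rev, map_mul]
          rfl
        show φ (eE (g * h)⁻¹ w) = φ (eE h⁻¹ (eE g⁻¹ w))
        rw [hw] }
  have hρV : ∀ (g : G) (φ : Module.Dual k W) (w : W),
      ρV g φ w = φ (eE g⁻¹ w) := fun _ _ _ => rfl
  -- the embedding
  let ι : (A →ₐ[k] k) → Module.Dual k W := fun x => x.toLinearMap ∘ₗ W.subtype
  have hι : ∀ (x : A →ₐ[k] k) (w : W), ι x w = x (w : A) := fun _ _ => rfl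
  -- equivariance
  have hequi : ∀ (g : G) (x : A →ₐ[k] k),
      ι (x.comp (ρ g⁻¹ : A →ₐ[k] A)) = ρV g (ι x) := by
    intro g x
    refine LinearMap.ext fun w => ?_
    rw [hρV, hι, hι]
    rfl
  -- injectivity
  have hinj : Function.Injective ι := by
    intro x y hxy
    have hWxy : ∀ a ∈ (W : Set A), x a = y a := by
      intro a ha
      have := congrArg (fun φ : Module.Dual k W => φ ⟨a, ha⟩) hxy
      simpa [hι] using this
    have hle : Algebra.adjoin k (W : Set A) ≤ AlgHom.equalizer x y :=
      Algebra.adjoin_le fun a ha => hWxy a ha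
    rw [hWgen] at hle
    exact AlgHom.ext fun a => hle (Algebra.mem_top (R := k) (A := A))
  -- every regular function is realized by a polynomial function on the dual
  have hreg : ∀ a : A, ∃ f : Module.Dual k W → k,
      f ∈ linearPolyFunctions k (Module.Dual k W) ∧ ∀ x : A →ₐ[k] k, f (ι x) = x a := by
    intro a
    have ha : a ∈ Algebra.adjoin k (W : Set A) := hWgen ▸ Algebra.mem_top (R := k) (A := A)
    induction ha using Algebra.adjoin_induction with
    | mem w hw =>
        refine ⟨(Module.Dual.eval k W ⟨w, hw⟩ : Module.Dual k (Module.Dual k W)), ?_, ?_⟩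
        · exact Algebra.subset_adjoin ⟨Module.Dual.eval k W ⟨w, hw⟩, rfl⟩
        · intro x; rw [Module.Dual.eval_apply, hι]
    | algebraMap c =>
        refine ⟨algebraMap k (Module.Dual k W → k) c, Subalgebra.algebraMap_mem _ _, ?_⟩
        intro x
        simp [AlgHom.commutes]
    | add u v _ _ hu hv =>
        obtain ⟨fu, hfu, hfu'⟩ := hu
        obtain ⟨fv, hfv, hfv'⟩ := hv
        exact ⟨fu + fv, add_mem hfu hfv, fun x => by simp [hfu', hfv']⟩
    | mul u v _ _ hu hv =>
        obtain ⟨fu, hfu, hfu'⟩ := hu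
        obtain ⟨fv, hfv, hfv'⟩ := hv
        exact ⟨fu * fv, mul_mem hfu hfv, fun x => by simp [hfu', hfv']⟩
  choose f hfmem hfval using hreg
  -- the image of `ι` is the zero set of all polynomial functions vanishing on it
  set F : Set (Module.Dual k W → k) :=
    {h | h ∈ linearPolyFunctions k (Module.Dual k W) ∧ ∀ x : A →ₐ[k] k, h (ι x) = 0}
    with hFdef
  have hrangeF : Set.range ι = {v | ∀ h ∈ F, h v = 0} := by
    ext v
    constructor
    · rintro ⟨x, rfl⟩ h hh
      exact hh.2 x
    · intro hv
      have hz : ∀ h : Module.Dual k W → k,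
          h ∈ linearPolyFunctions k (Module.Dual k W) →
          (∀ x : A →ₐ[k] k, h (ι x) = 0) → h v = 0 := fun h h1 h2 => hv h ⟨h1, h2⟩
      have hmul : ∀ a b : A, f (a * b) v = f a v * f b v := by
        intro a b
        have := hz (f (a * b) - f a * f b)
          (sub_mem (hfmem _) (mul_mem (hfmem _) (hfmem _)))
          (fun x => by simp [hfval])
        exact sub_eq_zero.mp this
      have hadd : ∀ a b : A, f (a + b) v = f a v + f b v := by
        intro a b
        have := hz (f (a + b) - (f a + f b))
          (sub_mem (hfmem _) (add_mem (hfmem _) (hfmem _)))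
          (fun x => by simp [hfval])
        exact sub_eq_zero.mp this
      have hconst : ∀ c : k, f (algebraMap k A c) v = c := by
        intro c
        have := hz (f (algebraMap k A c) - algebraMap k (Module.Dual k W → k) c)
          (sub_mem (hfmem _) (Subalgebra.algebraMap_mem _ _))
          (fun x => by simp [hfval])
        have h2 : f (algebraMap k A c) v - c = 0 := by simpa using this
        exact sub_eq_zero.mp h2
      have hzero : f 0 v = 0 := hz (f 0) (hfmem 0) (fun x => by simp [hfval])
      have hone : f 1 v = 1 := by
        have := hconst 1
        simpa using this
      let x : A →ₐ[k] k :=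
        { toFun := fun a => f a v
          map_one' := hone
          map_mul' := hmul
          map_zero' := hzero
          map_add' := hadd
          commutes' := hconst }
      refine ⟨x, ?_⟩
      refine LinearMap.ext fun w => ?_
      have hw : f ((w : W) : A) v = v w := by
        have := hz (f ((w : W) : A) - (Module.Dual.eval k W w : Module.Dual k (Module.Dual k W)))
          (sub_mem (hfmem _) (Algebra.subset_adjoin ⟨Module.Dual.eval k W w, rfl⟩))
          (fun y => by simp [hfval, Module.Dual.eval_apply, hι])
        have h2 : f ((w : W) : A) v - v w = 0 := by
          simpa [Module.Dual.eval_apply] using this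
        exact sub_eq_zero.mp h2
      show x ((w : W) : A) = v w
      exact hw
  -- orbits in terms of closed sets
  choose S hS using hclosed
  have horb : ∀ x : A →ₐ[k] k,
      (Set.range fun g : G => ρV g (ι x))
        = Set.range ι ∩ {v | ∀ a ∈ S x, f a v = 0} := by
    intro x
    ext v
    constructor
    · rintro ⟨g, rfl⟩
      have hv : ρV g (ι x) = ι (x.comp (ρ g⁻¹ : A →ₐ[k] A)) := (hequi g x).symm
      constructor
      · show ρV g (ι x) ∈ Set.range ι
        rw [hv]
        exact Set.mem_range_self _
      · intro a ha
        have hy : x.comp (ρ g⁻¹ : A →ₐ[k] A)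
            ∈ {y : A →ₐ[k] k | ∃ g : G, y = x.comp (ρ g : A →ₐ[k] A)} := ⟨g⁻¹, rfl⟩
        rw [hS x] at hy
        show f a (ρV g (ι x)) = 0
        rw [hv, hfval]
        exact hy a ha
    · rintro ⟨⟨y, rfl⟩, hv⟩
      have hy : y ∈ {y : A →ₐ[k] k | ∀ a ∈ S x, y a = 0} := by
        intro a ha
        have := hv a ha
        rwa [hfval] at this
      rw [← hS x] at hy
      obtain ⟨g, hg⟩ := hy
      refine ⟨g⁻¹, ?_⟩
      show ρV g⁻¹ (ι x) = ι y
      rw [← hequi g⁻¹ x, inv_inv, hg]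
  refine ⟨Module.Dual k W, inferInstance, inferInstance, inferInstance, ρV, ι,
    hequi, hinj, ?_, ?_, ?_⟩
  · exact ⟨F, fun h hh => hh.1, hrangeF⟩
  · intro ξ
    refine ⟨(((Module.evalEquiv k W).symm ξ : W) : A), fun x => ?_⟩
    have := Module.apply_evalEquiv_symm_apply k W (ι x) ξ
    rw [← this, hι]
  · intro x
    constructor
    · refine ⟨F ∪ (f '' (S x)), ?_, ?_⟩
      · rintro h (hh | ⟨a, _, rfl⟩)
        · exact hh.1
        · exact hfmem a
      · rw [horb x, hrangeF]
        ext v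
        simp only [Set.mem_inter_iff, Set.mem_setOf_eq, Set.mem_union]
        constructor
        · rintro ⟨h1, h2⟩ g (hg | ⟨a, ha, rfl⟩)
          · exact h1 g hg
          · exact h2 a ha
        · intro hv
          exact ⟨fun g hg => hv g (Or.inl hg), fun a ha => hv (f a) (Or.inr ⟨a, ha, rfl⟩)⟩
    · intro g hg
      rw [← hequi g x] at hg
      have := hfree g⁻¹ x (hinj hg)
      simpa using this
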